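/- Let N^{n,t_k}_{t_ℓ} := (√h / (t_ℓ − t_k)) Σ_{m=k+1}^ℓ (∇X^{n,t_k,Xⁿ_{t_k}}_{t_{m-1}} / σ(t_m, Xⁿ_{t_{m-1}})) ε_m be the discrete Malliavin weight. Then there exists κ > 0 depending only on b, σ, T, δ such that (E[|N^{n,t_k}_{t_ℓ}|² | 𝒢ₖ])^{1/2} ≤ κ / (t_ℓ − t_k)^{1/2} almost surely for all 0 ≤ k < ℓ ≤ n. -/

import Mathlib

open MeasureTheory ProbabilityTheory

/-- integrable from a.e. bound -/
lemma st17_integrable {Ω : Type*} [m0 : MeasurableSpace Ω] {μ : Measure Ω} [IsProbabilityMeasure μ]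
    {f : Ω → ℝ} (hf : AEStronglyMeasurable f μ) {B : ℝ} (hB : ∀ᵐ ω ∂μ, |f ω| ≤ B) :
    Integrable f μ :=
  Integrable.mono' (integrable_const B) hf (by simpa [Real.norm_eq_abs] using hB)

/-- cross term lemma -/
lemma st17_cross {Ω : Type*} [m0 : MeasurableSpace Ω] (μ : Measure Ω) [IsProbabilityMeasure μ]
    {m1 m2 : MeasurableSpace Ω} (h12 : m1 ≤ m2) (h2 : m2 ≤ m0)
    {f e : Ω → ℝ} (hf : StronglyMeasurable[m2] f) (hfe : Integrable (f * e) μ)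
    (he : Integrable e μ) (hem : Measurable[m0] e)
    (hind : Indep (MeasurableSpace.comap e inferInstance) m2 μ)
    (hmean : μ[e] = 0) :
    μ[f * e | m1] =ᵐ[μ] 0 := by
  have hle : MeasurableSpace.comap e inferInstance ≤ m0 := measurable_iff_comap_le.mp hem
  have heM : StronglyMeasurable[MeasurableSpace.comap e inferInstance] e :=
    (Measurable.stronglyMeasurable (measurable_iff_comap_le.2 le_rfl))
  have h1 : μ[e | m2] =ᵐ[μ] fun _ => μ[e] := condExp_indep_eq hle h2 heM hind
  have h2' : μ[f * e | m2] =ᵐ[μ] 0 := by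
    refine (condExp_mul_of_stronglyMeasurable_left hf hfe he).trans ?_
    filter_upwards [h1] with ω hω
    simp [hω, hmean]
  calc μ[f * e | m1] =ᵐ[μ] μ[μ[f * e | m2] | m1] := (condExp_condExp_of_le h12 h2).symm
    _ =ᵐ[μ] μ[(0 : Ω → ℝ) | m1] := condExp_congr_ae h2'
    _ = 0 := condExp_zero

lemma st17_G_eq {Ω : Type*} [m0 : MeasurableSpace Ω] (ε : ℕ → Ω → ℝ) (j : ℕ) :
    MeasurableSpace.comap (fun ω => (fun i : Fin j => ε (i+1) ω)) inferInstance
      = ⨆ i : Fin j, MeasurableSpace.comap (ε (i+1)) inferInstance := by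
  have : (inferInstance : MeasurableSpace (Fin j → ℝ))
      = ⨆ i : Fin j, MeasurableSpace.comap (fun b => b i) inferInstance := rfl
  rw [this, MeasurableSpace.comap_iSup]
  congr 1
  ext i
  rw [MeasurableSpace.comap_comp]

lemma st17_indep {Ω : Type*} [m0 : MeasurableSpace Ω] {μ : Measure Ω} [IsProbabilityMeasure μ]
    {ε : ℕ → Ω → ℝ} (hεm : ∀ i, Measurable (ε i))
    (hind : ProbabilityTheory.iIndepFun ε μ)
    (j : ℕ) :
    Indep (⨆ i : Fin j, MeasurableSpace.comap (ε (i+1)) inferInstance)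
      (MeasurableSpace.comap (ε (j+1)) inferInstance) μ := by
  set s : ℕ → MeasurableSpace Ω := fun i => MeasurableSpace.comap (ε i) inferInstance with hs
  have h_le : ∀ i, s i ≤ m0 := fun i => measurable_iff_comap_le.mp (hεm i)
  have h_ind : iIndep s μ := (iIndepFun_iff_iIndep _ _ _).mp hind
  have h := indep_biSup_compl h_le h_ind (Set.Icc 1 j)
  refine indep_of_indep_of_le_right (indep_of_indep_of_le_left h ?_) ?_
  · exact iSup_le fun i => le_biSup s ⟨Nat.succ_le_succ (Nat.zero_le _), Nat.succ_le_of_lt i.2⟩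
  · exact le_biSup s (by simp)

lemma st17_pm {Ω : Type*} [m0 : MeasurableSpace Ω] {μ : Measure Ω} [IsProbabilityMeasure μ]
    {f : Ω → ℝ} (hf : Measurable f) (h1 : μ (f ⁻¹' {1}) = 1/2) (h2 : μ (f ⁻¹' {-1}) = 1/2) :
    (∀ᵐ ω ∂μ, f ω = 1 ∨ f ω = -1) ∧ μ[f] = 0 := by
  have hA : MeasurableSet (f ⁻¹' {1}) := hf (measurableSet_singleton _)
  have hB : MeasurableSet (f ⁻¹' {-1}) := hf (measurableSet_singleton _)
  have hdisj : Disjoint (f ⁻¹' {1}) (f ⁻¹' {-1}) := by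
    refine Set.disjoint_left.mpr fun ω hω1 hω2 => ?_
    simp only [Set.mem_preimage, Set.mem_singleton_iff] at hω1 hω2
    norm_num [hω1] at hω2
  have hU : μ (f ⁻¹' {1} ∪ f ⁻¹' {-1}) = 1 := by
    rw [measure_union hdisj hB, h1, h2, ENNReal.add_halves]
  have hae : ∀ᵐ ω ∂μ, f ω = 1 ∨ f ω = -1 := by
    have := (prob_compl_eq_zero_iff (hA.union hB)).mpr hU
    rw [ae_iff]
    convert this using 2
    ext ω; simp
  refine ⟨hae, ?_⟩
  have hg : f =ᵐ[μ] fun ω => Set.indicator (f ⁻¹' {1}) (fun _ => (1:ℝ)) ω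
      + Set.indicator (f ⁻¹' {-1}) (fun _ => (-1:ℝ)) ω := by
    filter_upwards [hae] with ω hω
    rcases hω with h | h
    · have hB' : ω ∉ f ⁻¹' {-1} := by simp [Set.mem_preimage, h]; norm_num
      simp [Set.indicator_of_mem, Set.indicator_of_notMem, h, hB', Set.mem_preimage]
    · have hA' : ω ∉ f ⁻¹' {1} := by simp [Set.mem_preimage, h]; norm_num
      simp [Set.indicator_of_mem, Set.indicator_of_notMem, h, hA', Set.mem_preimage]
  rw [integral_congr_ae hg, integral_add ((integrable_const (1:ℝ)).indicator hA)
    ((integrable_const (-1:ℝ)).indicator hB), integral_indicator_const _ hA,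
    integral_indicator_const _ hB, measureReal_def, measureReal_def, h1, h2]
  norm_num [ENNReal.toReal_div]

set_option maxHeartbeats 4000000 in
/-- For the discrete Malliavin weight
`N^{n,t_k}_{t_ℓ} = (√h/(t_ℓ−t_k)) ∑_{m=k+1}^ℓ (∇X^{n,t_k,Xⁿ_{t_k}}_{t_{m-1}} / σ(t_m, Xⁿ_{t_{m-1}})) ε_m`
there is `κ > 0` depending only on `b, σ, T, δ` such that
`(E[|N^{n,t_k}_{t_ℓ}|² | 𝒢_k])^{1/2} ≤ κ / (t_ℓ − t_k)^{1/2}` a.s. for `0 ≤ k < ℓ ≤ n`. -/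
theorem statement_17
    {Ω : Type*} [m0 : MeasurableSpace Ω] (μ : Measure Ω) [IsProbabilityMeasure μ]
    (T δ : ℝ) (hT : 0 < T) (hδ : 0 < δ)
    (b σ bx sx : ℝ → ℝ → ℝ) (M : ℝ) (hM : 0 < M)
    (hderiv : ∀ t x : ℝ, HasDerivAt (b t) (bx t x) x ∧ HasDerivAt (σ t) (sx t x) x)
    (hbound : ∀ t x : ℝ, |b t x| ≤ M ∧ |σ t x| ≤ M ∧ |bx t x| ≤ M ∧ |sx t x| ≤ M)
    (hell : ∀ t x : ℝ, δ ≤ σ t x) :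
    ∃ κ : ℝ, 0 < κ ∧
      ∀ (n : ℕ), 0 < n →
      ∀ (ε : ℕ → Ω → ℝ),
        (∀ i, Measurable (ε i)) →
        ProbabilityTheory.iIndepFun ε μ →
        (∀ i, μ (ε i ⁻¹' {1}) = 1/2 ∧ μ (ε i ⁻¹' {-1}) = 1/2) →
      ∀ (G : ℕ → MeasurableSpace Ω),
        (∀ j, G j = MeasurableSpace.comap
          (fun ω => (fun i : Fin j => ε (i+1) ω)) inferInstance) →
      ∀ (x : ℝ) (k ℓ : ℕ), k < ℓ → ℓ ≤ n →
      ∀ (X V : ℕ → Ω → ℝ),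
        -- the Euler scheme started at `x`
        (∀ ω, X 0 ω = x) →
        (∀ j ω, X (j+1) ω = X j ω + (T/n) * b ((j+1) * (T/n)) (X j ω)
          + Real.sqrt (T/n) * σ ((j+1) * (T/n)) (X j ω) * ε (j+1) ω) →
        -- the variational process `V m = ∇X^{n,t_k,Xⁿ_{t_k}}_{t_m}`
        (∀ ω, V k ω = 1) →
        (∀ l ω, k ≤ l → V (l+1) ω = V l ω
          + (T/n) * bx ((l+1) * (T/n)) (X l ω) * V l ω
          + Real.sqrt (T/n) * sx ((l+1) * (T/n)) (X l ω) * V l ω * ε (l+1) ω) →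
      ∀ᵐ ω ∂μ,
        Real.sqrt
          ((μ[fun ω' =>
              ((Real.sqrt (T/n) / (ℓ * (T/n) - k * (T/n)))
                * ∑ m ∈ Finset.Icc (k+1) ℓ,
                    (V (m-1) ω' / σ (m * (T/n)) (X (m-1) ω')) * ε m ω') ^ 2 | G k]) ω)
          ≤ κ / Real.sqrt (ℓ * (T/n) - k * (T/n)) := by
  classical
  set C : ℝ := 2*M + M^2*T + M^2 with hC_def
  have hCpos : 0 < C := by positivity
  set K : ℝ := Real.exp (C*T) / δ^2 with hK_def
  have hKpos : 0 < K := by positivity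
  refine ⟨Real.sqrt K, Real.sqrt_pos.mpr hKpos, ?_⟩
  intro n hn ε hεm hεind hεpm G hG x k ℓ hkℓ hℓn X V hX0 hXrec hVk hVrec
  have hnR : (0:ℝ) < (n:ℝ) := Nat.cast_pos.mpr hn
  have hh : (0:ℝ) < T/n := div_pos hT hnR
  have hhT : T/(n:ℝ) ≤ T := by
    apply div_le_self hT.le
    exact_mod_cast hn
  -- a.e. ±1 and mean zero
  have hae1 : ∀ᵐ ω ∂μ, ∀ i, ε i ω = 1 ∨ ε i ω = -1 :=
    ae_all_iff.mpr fun i => (st17_pm (hεm i) (hεpm i).1 (hεpm i).2).1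
  have hmean : ∀ i, μ[ε i] = 0 := fun i => (st17_pm (hεm i) (hεpm i).1 (hεpm i).2).2
  have hεbd : ∀ᵐ ω ∂μ, ∀ i, |ε i ω| ≤ 1 := by
    filter_upwards [hae1] with ω hω i
    rcases hω i with h | h <;> simp [h]
  -- σ-algebra facts
  have hGle : ∀ j, G j ≤ m0 := by
    intro j
    rw [hG j]
    exact measurable_iff_comap_le.mp (measurable_pi_lambda _ fun i => hεm (i+1))
  have hGmono : ∀ {i j : ℕ}, i ≤ j → G i ≤ G j := by
    intro i j hij
    rw [hG i, hG j, st17_G_eq, st17_G_eq]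
    refine iSup_le fun p => ?_
    exact le_iSup_of_le (⟨p.1, lt_of_lt_of_le p.2 hij⟩ : Fin j) le_rfl
  have hεGmeas : ∀ m j : ℕ, 1 ≤ m → m ≤ j → Measurable[G j] (ε m) := by
    intro m j h1m hmj
    rw [hG j, st17_G_eq]
    apply Measurable.mono (_ : Measurable[MeasurableSpace.comap (ε m) inferInstance] (ε m))
    · have : m - 1 < j := by omega
      have := le_iSup (fun i : Fin j => MeasurableSpace.comap (ε (i+1)) inferInstance) ⟨m-1, this⟩
      simpa [Nat.sub_add_cancel h1m] using this
    · exact le_rfl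
    · exact measurable_iff_comap_le.mpr le_rfl
  have hindep : ∀ j, Indep (MeasurableSpace.comap (ε (j+1)) inferInstance) (G j) μ := by
    intro j
    rw [hG j, st17_G_eq]
    exact (st17_indep hεm hεind j).symm
  -- continuity of coefficients
  have hbc : ∀ t, Continuous (b t) := fun t =>
    continuous_iff_continuousAt.mpr fun x => (hderiv t x).1.differentiableAt.continuousAt
  have hσc : ∀ t, Continuous (σ t) := fun t =>
    continuous_iff_continuousAt.mpr fun x => (hderiv t x).2.differentiableAt.continuousAt
  -- measurability of X and V
  have hXmeas : ∀ j, Measurable[G j] (X j) := by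
    intro j
    induction j with
    | zero =>
      have : X 0 = fun _ => x := funext hX0
      rw [this]; exact measurable_const
    | succ j ih =>
      have hXj : Measurable[G (j+1)] (X j) := ih.mono (hGmono (Nat.le_succ j)) le_rfl
      have : X (j+1) = fun ω => X j ω + (T/n) * b ((j+1) * (T/n)) (X j ω)
          + Real.sqrt (T/n) * σ ((j+1) * (T/n)) (X j ω) * ε (j+1) ω := funext (hXrec j)
      rw [this]
      exact ((hXj.add (measurable_const.mul ((hbc _).measurable.comp hXj))).add
        ((measurable_const.mul ((hσc _).measurable.comp hXj)).mul
          (hεGmeas (j+1) (j+1) (Nat.succ_le_succ (Nat.zero_le _)) le_rfl)))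
  have hXm0 : ∀ j, Measurable (X j) := fun j => (hXmeas j).mono (hGle j) le_rfl
  have hbxm : ∀ t, Measurable (bx t) := by
    intro t
    have : bx t = deriv (b t) := funext fun y => ((hderiv t y).1.deriv).symm
    rw [this]; exact measurable_deriv _
  have hsxm : ∀ t, Measurable (sx t) := by
    intro t
    have : sx t = deriv (σ t) := funext fun y => ((hderiv t y).2.deriv).symm
    rw [this]; exact measurable_deriv _
  have hVmeas : ∀ j, k ≤ j → Measurable[G j] (V j) := by
    intro j hkj
    induction j, hkj using Nat.le_induction with
    | base =>
      have : V k = fun _ => 1 := funext hVk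
      rw [this]; exact measurable_const
    | succ j hkj ih =>
      have hVj : Measurable[G (j+1)] (V j) := ih.mono (hGmono (Nat.le_succ j)) le_rfl
      have hXj : Measurable[G (j+1)] (X j) := (hXmeas j).mono (hGmono (Nat.le_succ j)) le_rfl
      have : V (j+1) = fun ω => V j ω + (T/n) * bx ((j+1) * (T/n)) (X j ω) * V j ω
          + Real.sqrt (T/n) * sx ((j+1) * (T/n)) (X j ω) * V j ω * ε (j+1) ω :=
        funext fun ω => hVrec j ω hkj
      rw [this]
      exact ((hVj.add ((measurable_const.mul ((hbxm _).comp hXj)).mul hVj)).add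
        (((measurable_const.mul ((hsxm _).comp hXj)).mul hVj).mul
          (hεGmeas (j+1) (j+1) (Nat.succ_le_succ (Nat.zero_le _)) le_rfl)))
  have hVm0 : ∀ j, k ≤ j → Measurable (V j) := fun j hj => (hVmeas j hj).mono (hGle j) le_rfl
  -- a.e. boundedness
  have hXbd : ∀ j, ∃ B : ℝ, 0 ≤ B ∧ ∀ᵐ ω ∂μ, |X j ω| ≤ B := by
    intro j
    induction j with
    | zero => exact ⟨|x|, abs_nonneg x, ae_of_all μ fun ω => by rw [hX0]⟩
    | succ j ih =>
      obtain ⟨B, hB0, hB⟩ := ih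
      refine ⟨B + (T/n)*M + Real.sqrt (T/n)*M, by positivity, ?_⟩
      filter_upwards [hB, hεbd] with ω h1 h2
      rw [hXrec j ω]
      have e1 : |(T/n) * b ((j+1) * (T/n)) (X j ω)| ≤ (T/n)*M := by
        rw [abs_mul, abs_of_pos hh]
        exact mul_le_mul_of_nonneg_left (hbound _ _).1 hh.le
      have e2 : |Real.sqrt (T/n) * σ ((j+1) * (T/n)) (X j ω) * ε (j+1) ω|
          ≤ Real.sqrt (T/n) * M := by
        rw [abs_mul, abs_mul, abs_of_nonneg (Real.sqrt_nonneg _)]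
        calc Real.sqrt (T/n) * |σ ((j+1) * (T/n)) (X j ω)| * |ε (j+1) ω|
            ≤ Real.sqrt (T/n) * M * 1 := by
              apply mul_le_mul (mul_le_mul_of_nonneg_left (hbound _ _).2.1
                (Real.sqrt_nonneg _)) (h2 (j+1)) (abs_nonneg _) (by positivity)
          _ = Real.sqrt (T/n) * M := mul_one _
      calc |X j ω + (T/n) * b ((j+1) * (T/n)) (X j ω)
            + Real.sqrt (T/n) * σ ((j+1) * (T/n)) (X j ω) * ε (j+1) ω|
          ≤ |X j ω + (T/n) * b ((j+1) * (T/n)) (X j ω)|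
            + |Real.sqrt (T/n) * σ ((j+1) * (T/n)) (X j ω) * ε (j+1) ω| := abs_add_le _ _
        _ ≤ (|X j ω| + |(T/n) * b ((j+1) * (T/n)) (X j ω)|)
            + |Real.sqrt (T/n) * σ ((j+1) * (T/n)) (X j ω) * ε (j+1) ω| := by
              exact add_le_add_left (abs_add_le _ _) _
        _ ≤ (B + (T/n)*M) + Real.sqrt (T/n)*M := by
              exact add_le_add (add_le_add h1 e1) e2
  have hVbd : ∀ j, k ≤ j → ∃ B : ℝ, 0 ≤ B ∧ ∀ᵐ ω ∂μ, |V j ω| ≤ B := by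
    intro j hkj
    induction j, hkj using Nat.le_induction with
    | base => exact ⟨1, zero_le_one, ae_of_all μ fun ω => by rw [hVk]; norm_num⟩
    | succ j hkj ih =>
      obtain ⟨B, hB0, hB⟩ := ih
      refine ⟨B * (1 + (T/n)*M + Real.sqrt (T/n)*M), by positivity, ?_⟩
      filter_upwards [hB, hεbd] with ω h1 h2
      rw [hVrec j ω hkj]
      have e1 : |(T/n) * bx ((j+1) * (T/n)) (X j ω) * V j ω| ≤ (T/n)*M*B := by
        rw [abs_mul, abs_mul, abs_of_pos hh]
        refine mul_le_mul (mul_le_mul_of_nonneg_left (hbound _ _).2.2.1 hh.le) h1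
          (abs_nonneg _) (by positivity)
      have e2 : |Real.sqrt (T/n) * sx ((j+1) * (T/n)) (X j ω) * V j ω * ε (j+1) ω|
          ≤ Real.sqrt (T/n) * M * B := by
        rw [abs_mul, abs_mul, abs_mul, abs_of_nonneg (Real.sqrt_nonneg _)]
        calc Real.sqrt (T/n) * |sx ((j+1) * (T/n)) (X j ω)| * |V j ω| * |ε (j+1) ω|
            ≤ Real.sqrt (T/n) * M * B * 1 := by
              refine mul_le_mul (mul_le_mul (mul_le_mul_of_nonneg_left (hbound _ _).2.2.2
                (Real.sqrt_nonneg _)) h1 (abs_nonneg _) (by positivity)) (h2 (j+1))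
                (abs_nonneg _) (by positivity)
          _ = Real.sqrt (T/n) * M * B := mul_one _
      calc |V j ω + (T/n) * bx ((j+1) * (T/n)) (X j ω) * V j ω
            + Real.sqrt (T/n) * sx ((j+1) * (T/n)) (X j ω) * V j ω * ε (j+1) ω|
          ≤ |V j ω| + |(T/n) * bx ((j+1) * (T/n)) (X j ω) * V j ω|
            + |Real.sqrt (T/n) * sx ((j+1) * (T/n)) (X j ω) * V j ω * ε (j+1) ω| :=
            (abs_add_le _ _).trans (add_le_add_left (abs_add_le _ _) _)
        _ ≤ B + (T/n)*M*B + Real.sqrt (T/n)*M*B := add_le_add (add_le_add h1 e1) e2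
        _ = B * (1 + (T/n)*M + Real.sqrt (T/n)*M) := by ring
  -- integrability helper
  have hInt : ∀ f : Ω → ℝ, Measurable f → (∃ B : ℝ, 0 ≤ B ∧ ∀ᵐ ω ∂μ, |f ω| ≤ B) →
      Integrable f μ := by
    rintro f hf ⟨B, _, hB⟩
    exact st17_integrable hf.aestronglyMeasurable hB
  have hbd_mul : ∀ {f g : Ω → ℝ}, (∃ B : ℝ, 0 ≤ B ∧ ∀ᵐ ω ∂μ, |f ω| ≤ B) →
      (∃ B : ℝ, 0 ≤ B ∧ ∀ᵐ ω ∂μ, |g ω| ≤ B) →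
      (∃ B : ℝ, 0 ≤ B ∧ ∀ᵐ ω ∂μ, |f ω * g ω| ≤ B) := by
    rintro f g ⟨Bf, hf0, hf⟩ ⟨Bg, hg0, hg⟩
    refine ⟨Bf * Bg, mul_nonneg hf0 hg0, ?_⟩
    filter_upwards [hf, hg] with ω h1 h2
    rw [abs_mul]
    exact mul_le_mul h1 h2 (abs_nonneg _) hf0
  have hbd_add : ∀ {f g : Ω → ℝ}, (∃ B : ℝ, 0 ≤ B ∧ ∀ᵐ ω ∂μ, |f ω| ≤ B) →
      (∃ B : ℝ, 0 ≤ B ∧ ∀ᵐ ω ∂μ, |g ω| ≤ B) →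
      (∃ B : ℝ, 0 ≤ B ∧ ∀ᵐ ω ∂μ, |f ω + g ω| ≤ B) := by
    rintro f g ⟨Bf, hf0, hf⟩ ⟨Bg, hg0, hg⟩
    refine ⟨Bf + Bg, add_nonneg hf0 hg0, ?_⟩
    filter_upwards [hf, hg] with ω h1 h2
    exact (abs_add_le _ _).trans (add_le_add h1 h2)
  have hbd_eps : ∀ i, ∃ B : ℝ, 0 ≤ B ∧ ∀ᵐ ω ∂μ, |ε i ω| ≤ B := by
    intro i
    exact ⟨1, zero_le_one, by filter_upwards [hεbd] with ω hω using hω i⟩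
  -- cross-term vanishing
  have hcross : ∀ (j : ℕ) (f : Ω → ℝ), k ≤ j → Measurable[G j] f →
      (∃ B : ℝ, 0 ≤ B ∧ ∀ᵐ ω ∂μ, |f ω| ≤ B) →
      μ[(fun ω => f ω * ε (j+1) ω) | G k] =ᵐ[μ] 0 := by
    intro j f hkj hfm hfb
    refine st17_cross μ (hGmono hkj) (hGle j) hfm.stronglyMeasurable ?_ ?_ (hεm (j+1))
      (hindep j) (hmean (j+1))
    · exact hInt _ ((hfm.mono (hGle j) le_rfl).mul (hεm (j+1))) (hbd_mul hfb (hbd_eps (j+1)))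
    · exact hInt _ (hεm (j+1)) (hbd_eps (j+1))
  -- conditional second moment of the variational process
  have hVmom : ∀ j, k ≤ j → j ≤ n →
      μ[(fun ω => (V j ω)^2) | G k] ≤ᵐ[μ] fun _ => (1 + C*(T/n))^(j-k) := by
    intro j hkj
    induction j, hkj using Nat.le_induction with
    | base =>
      intro _
      have h1 : (fun ω => (V k ω)^2) = fun _ => (1:ℝ) := funext fun ω => by rw [hVk]; norm_num
      rw [h1, Nat.sub_self, pow_zero, condExp_const (hGle k) (1:ℝ)]
    | succ j hkj ih =>
      intro hjn
      have ihn := ih (le_trans (Nat.le_succ j) hjn)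
      set a : Ω → ℝ := fun ω => V j ω * (1 + (T/n) * bx ((j+1) * (T/n)) (X j ω)) with ha_def
      set c : Ω → ℝ := fun ω => Real.sqrt (T/n) * sx ((j+1) * (T/n)) (X j ω) * V j ω with hc_def
      have hXj : Measurable[G j] (X j) := hXmeas j
      have hVj : Measurable[G j] (V j) := hVmeas j hkj
      have haM : Measurable[G j] a :=
        hVj.mul (measurable_const.add (measurable_const.mul ((hbxm _).comp hXj)))
      have hcM : Measurable[G j] c :=
        (measurable_const.mul ((hsxm _).comp hXj)).mul hVj
      have hab : ∃ B : ℝ, 0 ≤ B ∧ ∀ᵐ ω ∂μ, |a ω| ≤ B := by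
        refine hbd_mul (hVbd j hkj) ⟨1 + (T/n)*M, by positivity, ae_of_all μ fun ω => ?_⟩
        calc |1 + (T/n) * bx ((j+1) * (T/n)) (X j ω)|
            ≤ |(1:ℝ)| + |(T/n) * bx ((j+1) * (T/n)) (X j ω)| := abs_add_le _ _
          _ ≤ 1 + (T/n)*M := by
              rw [abs_one, abs_mul, abs_of_pos hh]
              exact add_le_add_right (mul_le_mul_of_nonneg_left (hbound _ _).2.2.1 hh.le) 1
      have hcb : ∃ B : ℝ, 0 ≤ B ∧ ∀ᵐ ω ∂μ, |c ω| ≤ B := by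
        have : ∃ B : ℝ, 0 ≤ B ∧ ∀ᵐ ω ∂μ,
            |Real.sqrt (T/n) * sx ((j+1) * (T/n)) (X j ω)| ≤ B := by
          refine ⟨Real.sqrt (T/n) * M, by positivity, ae_of_all μ fun ω => ?_⟩
          rw [abs_mul, abs_of_nonneg (Real.sqrt_nonneg _)]
          exact mul_le_mul_of_nonneg_left (hbound _ _).2.2.2 (Real.sqrt_nonneg _)
        exact hbd_mul this (hVbd j hkj)
      have hVj2int : Integrable (fun ω => (V j ω)^2) μ := by
        refine hInt _ ((hVm0 j hkj).pow_const 2) ?_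
        simpa [pow_two] using hbd_mul (hVbd j hkj) (hVbd j hkj)
      -- a.e. expansion of the square
      have hsq : ∀ᵐ ω ∂μ, (V (j+1) ω)^2 =
          (fun ω => a ω^2 + c ω^2) ω + (fun ω => (2 * a ω * c ω) * ε (j+1) ω) ω := by
        filter_upwards [hae1] with ω hω
        have hrec : V (j+1) ω = a ω + c ω * ε (j+1) ω := by
          rw [hVrec j ω hkj, ha_def, hc_def]; ring
        rcases hω (j+1) with h | h <;> rw [hrec, h] <;> ring
      have int1 : Integrable (fun ω => a ω^2 + c ω^2) μ := by
        refine hInt _ (((haM.mono (hGle j) le_rfl).pow_const 2).add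
          ((hcM.mono (hGle j) le_rfl).pow_const 2)) ?_
        simpa [pow_two] using hbd_add (hbd_mul hab hab) (hbd_mul hcb hcb)
      have int2 : Integrable (fun ω => (2 * a ω * c ω) * ε (j+1) ω) μ := by
        refine hInt _ (((measurable_const.mul (haM.mono (hGle j) le_rfl)).mul
          (hcM.mono (hGle j) le_rfl)).mul (hεm (j+1))) ?_
        exact hbd_mul (hbd_mul (hbd_mul ⟨2, by norm_num, ae_of_all μ fun ω => by norm_num⟩ hab)
          hcb) (hbd_eps (j+1))
      have E1 : μ[(fun ω => (V (j+1) ω)^2) | G k] =ᵐ[μ]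
          μ[(fun ω => a ω^2 + c ω^2) | G k] + μ[(fun ω => (2 * a ω * c ω) * ε (j+1) ω) | G k] := by
        refine (condExp_congr_ae (ae_eq_refl _ |>.trans ?_)).trans (condExp_add int1 int2 _)
        exact hsq
      have E2 : μ[(fun ω => (2 * a ω * c ω) * ε (j+1) ω) | G k] =ᵐ[μ] 0 :=
        hcross j _ hkj ((measurable_const.mul haM).mul hcM)
          (hbd_mul (hbd_mul ⟨2, by norm_num, ae_of_all μ fun ω => by norm_num⟩ hab) hcb)
      -- pointwise bound
      have hpt : ∀ ω, a ω^2 + c ω^2 ≤ ((1 + C*(T/n)) • fun ω => (V j ω)^2) ω := by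
        intro ω
        have hsqrt : Real.sqrt (T/n)^2 = T/n := Real.sq_sqrt hh.le
        have hbx := (hbound ((j+1) * (T/n)) (X j ω)).2.2.1
        have hsx := (hbound ((j+1) * (T/n)) (X j ω)).2.2.2
        have hbx' := abs_le.mp hbx
        have hsx' := abs_le.mp hsx
        have hF : (1 + (T/n) * bx ((j+1) * (T/n)) (X j ω))^2
            + (T/n) * (sx ((j+1) * (T/n)) (X j ω))^2 ≤ 1 + C*(T/n) := by
          rw [hC_def]
          have hB2 : (bx ((j+1) * (T/n)) (X j ω))^2 ≤ M^2 := sq_le_sq' hbx'.1 hbx'.2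
          have hS2 : (sx ((j+1) * (T/n)) (X j ω))^2 ≤ M^2 := sq_le_sq' hsx'.1 hsx'.2
          have h2 : (T/n)^2 ≤ (T/n)*T := by nlinarith
          have e1 : 2*(T/n)*(bx ((j+1) * (T/n)) (X j ω)) ≤ 2*(T/n)*M := by
            have := mul_le_mul_of_nonneg_left hbx'.2 hh.le
            nlinarith
          have e2 : (T/n)^2 * (bx ((j+1) * (T/n)) (X j ω))^2 ≤ (T/n)*T*M^2 :=
            mul_le_mul h2 hB2 (sq_nonneg _) (by positivity)
          have e3 : (T/n) * (sx ((j+1) * (T/n)) (X j ω))^2 ≤ (T/n)*M^2 :=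
            mul_le_mul_of_nonneg_left hS2 hh.le
          nlinarith [e1, e2, e3]
        have expand : a ω^2 + c ω^2 = (V j ω)^2 *
            ((1 + (T/n) * bx ((j+1) * (T/n)) (X j ω))^2
              + (T/n) * (sx ((j+1) * (T/n)) (X j ω))^2) := by
          simp only [ha_def, hc_def]
          linear_combination (sx ((j+1) * (T/n)) (X j ω))^2 * (V j ω)^2 * hsqrt
        rw [expand]
        simp only [Pi.smul_apply, smul_eq_mul]
        calc (V j ω)^2 * ((1 + (T/n) * bx ((j+1) * (T/n)) (X j ω))^2
              + (T/n) * (sx ((j+1) * (T/n)) (X j ω))^2)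
            ≤ (V j ω)^2 * (1 + C*(T/n)) := mul_le_mul_of_nonneg_left hF (sq_nonneg _)
          _ = (1 + C*(T/n)) * (V j ω)^2 := mul_comm _ _
      have E3 : μ[(fun ω => a ω^2 + c ω^2) | G k] ≤ᵐ[μ]
          μ[((1 + C*(T/n)) • fun ω => (V j ω)^2) | G k] :=
        condExp_mono int1 (hVj2int.smul (1 + C*(T/n))) (ae_of_all μ hpt)
      have E4 : μ[((1 + C*(T/n)) • fun ω => (V j ω)^2) | G k] =ᵐ[μ]
          (1 + C*(T/n)) • μ[(fun ω => (V j ω)^2) | G k] := condExp_smul _ _ _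
      have hq : (0:ℝ) ≤ 1 + C*(T/n) := by positivity
      filter_upwards [E1, E2, E3, E4, ihn] with ω e1 e2 e3 e4 e5
      have : (j + 1 - k) = (j - k) + 1 := by omega
      rw [e1, Pi.add_apply, e2, Pi.zero_apply, add_zero, this, pow_succ]
      calc (μ[(fun ω => a ω^2 + c ω^2) | G k]) ω
          ≤ (μ[((1 + C*(T/n)) • fun ω => (V j ω)^2) | G k]) ω := e3
        _ = (1 + C*(T/n)) * (μ[(fun ω => (V j ω)^2) | G k]) ω := by
            rw [e4]; simp [smul_eq_mul]
        _ ≤ (1 + C*(T/n)) * (1 + C*(T/n))^(j-k) := mul_le_mul_of_nonneg_left e5 hq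
        _ = (1 + C*(T/n))^(j-k) * (1 + C*(T/n)) := mul_comm _ _
  -- uniform exponential bound
  have hexp : ∀ p : ℕ, p ≤ n → (1 + C*(T/n))^p ≤ Real.exp (C*T) := by
    intro p hp
    have h1 : 1 + C*(T/n) ≤ Real.exp (C*(T/n)) := by
      have := Real.add_one_le_exp (C*(T/n)); linarith
    calc (1 + C*(T/n))^p ≤ (Real.exp (C*(T/n)))^p := pow_le_pow_left₀ (by positivity) h1 p
      _ = Real.exp ((p:ℝ) * (C*(T/n))) := (Real.exp_nat_mul _ p).symm
      _ ≤ Real.exp (C*T) := by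
          apply Real.exp_le_exp.mpr
          have hpn : (p:ℝ) ≤ (n:ℝ) := Nat.cast_le.mpr hp
          have h2 : (p:ℝ) * (T/n) ≤ (n:ℝ) * (T/n) := mul_le_mul_of_nonneg_right hpn hh.le
          have h3 : (n:ℝ) * (T/n) = T := by field_simp
          have h4 : (p:ℝ) * (T/n) ≤ T := by linarith
          calc (p:ℝ) * (C*(T/n)) = C * ((p:ℝ) * (T/n)) := by ring
            _ ≤ C * T := mul_le_mul_of_nonneg_left h4 hCpos.le
  -- the weight functions
  have hAmeas : ∀ m j : ℕ, k+1 ≤ m → m ≤ j →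
      Measurable[G j] (fun ω => V (m-1) ω / σ (m*(T/n)) (X (m-1) ω)) := by
    intro m j hkm hmj
    have h1 : k ≤ m - 1 := by omega
    have h2 : m - 1 ≤ j := by omega
    exact ((hVmeas (m-1) h1).mono (hGmono h2) le_rfl).div
      (((hσc _).measurable.comp ((hXmeas (m-1)).mono (hGmono h2) le_rfl)))
  have hAbd : ∀ m : ℕ, k+1 ≤ m →
      ∃ B : ℝ, 0 ≤ B ∧ ∀ᵐ ω ∂μ, |V (m-1) ω / σ (m*(T/n)) (X (m-1) ω)| ≤ B := by
    intro m hkm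
    obtain ⟨B, hB0, hB⟩ := hVbd (m-1) (by omega)
    refine ⟨B/δ, by positivity, ?_⟩
    filter_upwards [hB] with ω h1
    rw [abs_div]
    have hσδ : δ ≤ |σ (m*(T/n)) (X (m-1) ω)| := by
      rw [abs_of_pos (lt_of_lt_of_le hδ (hell _ _))]
      exact hell _ _
    exact div_le_div₀ hB0 h1 hδ hσδ
  -- conditional second moment of the weights
  have hAmom : ∀ m : ℕ, k+1 ≤ m → m ≤ ℓ →
      μ[(fun ω => (V (m-1) ω / σ (m*(T/n)) (X (m-1) ω))^2) | G k] ≤ᵐ[μ] fun _ => K := by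
    intro m hkm hmℓ
    have h1 : k ≤ m - 1 := by omega
    have hman : m - 1 ≤ n := by omega
    have hA2int : Integrable (fun ω => (V (m-1) ω / σ (m*(T/n)) (X (m-1) ω))^2) μ := by
      refine hInt _ (((hAmeas m m hkm le_rfl).mono (hGle m) le_rfl).pow_const 2) ?_
      simpa [pow_two] using hbd_mul (hAbd m hkm) (hAbd m hkm)
    have hV2int : Integrable (fun ω => (V (m-1) ω)^2) μ := by
      refine hInt _ ((hVm0 (m-1) h1).pow_const 2) ?_
      simpa [pow_two] using hbd_mul (hVbd (m-1) h1) (hVbd (m-1) h1)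
    have hpt : ∀ ω, (V (m-1) ω / σ (m*(T/n)) (X (m-1) ω))^2
        ≤ ((1/δ^2) • fun ω => (V (m-1) ω)^2) ω := by
      intro ω
      have hσ2 : δ^2 ≤ (σ (m*(T/n)) (X (m-1) ω))^2 := pow_le_pow_left₀ hδ.le (hell _ _) 2
      rw [div_pow]
      simp only [Pi.smul_apply, smul_eq_mul]
      calc (V (m-1) ω)^2 / (σ (m*(T/n)) (X (m-1) ω))^2
          ≤ (V (m-1) ω)^2 / δ^2 :=
            div_le_div_of_nonneg_left (sq_nonneg _) (by positivity) hσ2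
        _ = 1/δ^2 * (V (m-1) ω)^2 := by ring
    have E3 : μ[(fun ω => (V (m-1) ω / σ (m*(T/n)) (X (m-1) ω))^2) | G k] ≤ᵐ[μ]
        μ[((1/δ^2) • fun ω => (V (m-1) ω)^2) | G k] :=
      condExp_mono hA2int (hV2int.smul (1/δ^2)) (ae_of_all μ hpt)
    have E4 : μ[((1/δ^2) • fun ω => (V (m-1) ω)^2) | G k] =ᵐ[μ]
        (1/δ^2) • μ[(fun ω => (V (m-1) ω)^2) | G k] := condExp_smul _ _ _
    filter_upwards [E3, E4, hVmom (m-1) h1 hman] with ω e3 e4 e5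
    calc (μ[(fun ω => (V (m-1) ω / σ (m*(T/n)) (X (m-1) ω))^2) | G k]) ω
        ≤ (μ[((1/δ^2) • fun ω => (V (m-1) ω)^2) | G k]) ω := e3
      _ = 1/δ^2 * (μ[(fun ω => (V (m-1) ω)^2) | G k]) ω := by rw [e4]; simp [smul_eq_mul]
      _ ≤ 1/δ^2 * (1 + C*(T/n))^(m-1-k) := by
          apply mul_le_mul_of_nonneg_left e5 (by positivity)
      _ ≤ 1/δ^2 * Real.exp (C*T) := by
          apply mul_le_mul_of_nonneg_left (hexp _ (by omega)) (by positivity)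
      _ = K := by rw [hK_def]; ring
  -- the martingale sums
  have hSmeas : ∀ j, k ≤ j → Measurable[G j]
      (fun ω => ∑ m ∈ Finset.Icc (k+1) j, (V (m-1) ω / σ (m*(T/n)) (X (m-1) ω)) * ε m ω) := by
    intro j hkj
    induction j, hkj using Nat.le_induction with
    | base =>
      have : (fun ω => ∑ m ∈ Finset.Icc (k+1) k,
          (V (m-1) ω / σ (m*(T/n)) (X (m-1) ω)) * ε m ω) = fun _ => 0 := by
        funext ω; rw [Finset.Icc_eq_empty (by omega)]; simp
      rw [this]; exact measurable_const
    | succ j hkj ih =>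
      have hsplit : (fun ω => ∑ m ∈ Finset.Icc (k+1) (j+1),
          (V (m-1) ω / σ (m*(T/n)) (X (m-1) ω)) * ε m ω)
          = fun ω => (∑ m ∈ Finset.Icc (k+1) j, (V (m-1) ω / σ (m*(T/n)) (X (m-1) ω)) * ε m ω)
            + (V j ω / σ ((j+1)*(T/n)) (X j ω)) * ε (j+1) ω := by
        funext ω
        rw [Finset.sum_Icc_succ_top (by omega)]
        simp
      rw [hsplit]
      exact (ih.mono (hGmono (Nat.le_succ j)) le_rfl).add
        ((by simpa using hAmeas (j+1) (j+1) (by omega) le_rfl :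
            Measurable[G (j+1)] (fun ω => V j ω / σ ((j+1)*(T/n)) (X j ω))).mul
          (hεGmeas (j+1) (j+1) (by omega) le_rfl))
  have hSbd : ∀ j, k ≤ j → ∃ B : ℝ, 0 ≤ B ∧ ∀ᵐ ω ∂μ,
      |∑ m ∈ Finset.Icc (k+1) j, (V (m-1) ω / σ (m*(T/n)) (X (m-1) ω)) * ε m ω| ≤ B := by
    intro j hkj
    induction j, hkj using Nat.le_induction with
    | base =>
      refine ⟨0, le_rfl, ae_of_all μ fun ω => ?_⟩
      rw [Finset.Icc_eq_empty (by omega)]; simp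
    | succ j hkj ih =>
      have := hbd_add ih (hbd_mul (hAbd (j+1) (by omega)) (hbd_eps (j+1)))
      obtain ⟨B, hB0, hB⟩ := this
      refine ⟨B, hB0, ?_⟩
      filter_upwards [hB] with ω h1
      rw [Finset.sum_Icc_succ_top (by omega)]
      simpa using h1
  have hSint2 : ∀ j, k ≤ j → Integrable (fun ω =>
      (∑ m ∈ Finset.Icc (k+1) j, (V (m-1) ω / σ (m*(T/n)) (X (m-1) ω)) * ε m ω)^2) μ := by
    intro j hkj
    refine hInt _ (((hSmeas j hkj).mono (hGle j) le_rfl).pow_const 2) ?_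
    simpa [pow_two] using hbd_mul (hSbd j hkj) (hSbd j hkj)
  -- conditional second moment of the martingale sums
  have hSmom : ∀ j, k ≤ j → j ≤ ℓ →
      μ[(fun ω => (∑ m ∈ Finset.Icc (k+1) j,
          (V (m-1) ω / σ (m*(T/n)) (X (m-1) ω)) * ε m ω)^2) | G k]
        ≤ᵐ[μ] fun _ => ((j-k : ℕ) : ℝ) * K := by
    intro j hkj
    induction j, hkj using Nat.le_induction with
    | base =>
      intro _
      have h1 : (fun ω => (∑ m ∈ Finset.Icc (k+1) k,
          (V (m-1) ω / σ (m*(T/n)) (X (m-1) ω)) * ε m ω)^2) = fun _ => (0:ℝ) := by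
        funext ω; rw [Finset.Icc_eq_empty (by omega)]; simp
      rw [h1, Nat.sub_self]
      have h2 : μ[(fun _ => (0:ℝ)) | G k] = fun _ => (0:ℝ) := condExp_const (hGle k) (0:ℝ)
      rw [h2]
      refine ae_of_all μ fun ω => ?_
      simp
    | succ j hkj ih =>
      intro hjℓ
      have ihℓ := ih (by omega)
      set Sj : Ω → ℝ := fun ω => ∑ m ∈ Finset.Icc (k+1) j,
        (V (m-1) ω / σ (m*(T/n)) (X (m-1) ω)) * ε m ω with hSj_def
      set Aj : Ω → ℝ := fun ω => V j ω / σ ((j+1:ℕ)*(T/n)) (X j ω) with hAj_def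
      have hAjm : Measurable[G j] Aj :=
        (hVmeas j hkj).div ((hσc _).measurable.comp (hXmeas j))
      have hAjb : ∃ B : ℝ, 0 ≤ B ∧ ∀ᵐ ω ∂μ, |Aj ω| ≤ B := hAbd (j+1) (by omega)
      have hSjm : Measurable[G j] Sj := hSmeas j hkj
      have hSjb : ∃ B : ℝ, 0 ≤ B ∧ ∀ᵐ ω ∂μ, |Sj ω| ≤ B := hSbd j hkj
      have hsplit : ∀ ω, (∑ m ∈ Finset.Icc (k+1) (j+1),
          (V (m-1) ω / σ (m*(T/n)) (X (m-1) ω)) * ε m ω) = Sj ω + Aj ω * ε (j+1) ω := by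
        intro ω
        rw [Finset.sum_Icc_succ_top (by omega)]
        simp [hSj_def, hAj_def]
      have hsq : ∀ᵐ ω ∂μ, (fun ω => (∑ m ∈ Finset.Icc (k+1) (j+1),
          (V (m-1) ω / σ (m*(T/n)) (X (m-1) ω)) * ε m ω)^2) ω =
          ((fun ω => Sj ω^2 + Aj ω^2) + fun ω => (2 * Sj ω * Aj ω) * ε (j+1) ω) ω := by
        filter_upwards [hae1] with ω hω
        simp only [Pi.add_apply, hsplit ω]
        rcases hω (j+1) with h | h <;> rw [h] <;> ring
      have int1 : Integrable (fun ω => Sj ω^2 + Aj ω^2) μ := by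
        refine hInt _ (((hSjm.mono (hGle j) le_rfl).pow_const 2).add
          ((hAjm.mono (hGle j) le_rfl).pow_const 2)) ?_
        simpa [pow_two] using hbd_add (hbd_mul hSjb hSjb) (hbd_mul hAjb hAjb)
      have int2 : Integrable (fun ω => (2 * Sj ω * Aj ω) * ε (j+1) ω) μ := by
        refine hInt _ (((measurable_const.mul (hSjm.mono (hGle j) le_rfl)).mul
          (hAjm.mono (hGle j) le_rfl)).mul (hεm (j+1))) ?_
        exact hbd_mul (hbd_mul (hbd_mul ⟨2, by norm_num, ae_of_all μ fun ω => by norm_num⟩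
          hSjb) hAjb) (hbd_eps (j+1))
      have int1a : Integrable (fun ω => Sj ω^2) μ := by
        refine hInt _ ((hSjm.mono (hGle j) le_rfl).pow_const 2) ?_
        simpa [pow_two] using hbd_mul hSjb hSjb
      have int1b : Integrable (fun ω => Aj ω^2) μ := by
        refine hInt _ ((hAjm.mono (hGle j) le_rfl).pow_const 2) ?_
        simpa [pow_two] using hbd_mul hAjb hAjb
      have E1 : μ[(fun ω => (∑ m ∈ Finset.Icc (k+1) (j+1),
          (V (m-1) ω / σ (m*(T/n)) (X (m-1) ω)) * ε m ω)^2) | G k] =ᵐ[μ]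
          μ[(fun ω => Sj ω^2 + Aj ω^2) | G k]
            + μ[(fun ω => (2 * Sj ω * Aj ω) * ε (j+1) ω) | G k] :=
        (condExp_congr_ae hsq).trans (condExp_add int1 int2 _)
      have E1' : μ[(fun ω => Sj ω^2 + Aj ω^2) | G k] =ᵐ[μ]
          μ[(fun ω => Sj ω^2) | G k] + μ[(fun ω => Aj ω^2) | G k] := condExp_add int1a int1b _
      have E2 : μ[(fun ω => (2 * Sj ω * Aj ω) * ε (j+1) ω) | G k] =ᵐ[μ] 0 :=
        hcross j _ hkj ((measurable_const.mul hSjm).mul hAjm)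
          (hbd_mul (hbd_mul ⟨2, by norm_num, ae_of_all μ fun ω => by norm_num⟩ hSjb) hAjb)
      have hAj2 : μ[(fun ω => Aj ω^2) | G k] ≤ᵐ[μ] fun _ => K := by
        have := hAmom (j+1) (by omega) hjℓ
        exact this
      filter_upwards [E1, E1', E2, hAj2, ihℓ] with ω e1 e1' e2 e3 e4
      rw [e1, Pi.add_apply, e2, Pi.zero_apply, add_zero, e1', Pi.add_apply]
      have hcast : ((j+1-k : ℕ) : ℝ) = ((j-k : ℕ) : ℝ) + 1 := by
        have : j+1-k = (j-k)+1 := by omega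
        rw [this]; push_cast; ring
      rw [hcast]
      have := add_le_add e4 e3
      linarith
  -- final assembly
  have hℓk : (k:ℝ) < (ℓ:ℝ) := Nat.cast_lt.mpr hkℓ
  have hp : (0:ℝ) < (ℓ:ℝ) - (k:ℝ) := sub_pos.mpr hℓk
  have hΔpos : (0:ℝ) < (ℓ:ℝ) * (T/n) - (k:ℝ) * (T/n) := by nlinarith [hh]
  have hΔcast : ((ℓ-k:ℕ):ℝ) = (ℓ:ℝ) - (k:ℝ) := Nat.cast_sub hkℓ.le
  have hfun : (fun ω' =>
        ((Real.sqrt (T/n) / (ℓ * (T/n) - k * (T/n)))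
          * ∑ m ∈ Finset.Icc (k+1) ℓ,
              (V (m-1) ω' / σ (m * (T/n)) (X (m-1) ω')) * ε m ω') ^ 2)
      = ((T/n) / ((ℓ:ℝ) * (T/n) - (k:ℝ) * (T/n))^2) • (fun ω' =>
          (∑ m ∈ Finset.Icc (k+1) ℓ,
              (V (m-1) ω' / σ (m * (T/n)) (X (m-1) ω')) * ε m ω')^2) := by
    funext ω'
    simp only [Pi.smul_apply, smul_eq_mul, mul_pow, div_pow, Real.sq_sqrt hh.le]
  have E : μ[(fun ω' =>
        ((Real.sqrt (T/n) / (ℓ * (T/n) - k * (T/n)))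
          * ∑ m ∈ Finset.Icc (k+1) ℓ,
              (V (m-1) ω' / σ (m * (T/n)) (X (m-1) ω')) * ε m ω') ^ 2) | G k] =ᵐ[μ]
      ((T/n) / ((ℓ:ℝ) * (T/n) - (k:ℝ) * (T/n))^2) • μ[(fun ω' =>
          (∑ m ∈ Finset.Icc (k+1) ℓ,
              (V (m-1) ω' / σ (m * (T/n)) (X (m-1) ω')) * ε m ω')^2) | G k] := by
    rw [hfun]
    exact condExp_smul _ _ _
  filter_upwards [E, hSmom ℓ hkℓ.le le_rfl] with ω e1 e2
  rw [e1]
  simp only [Pi.smul_apply, smul_eq_mul]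
  have hc0 : (0:ℝ) ≤ (T/n) / ((ℓ:ℝ) * (T/n) - (k:ℝ) * (T/n))^2 := by positivity
  have step := mul_le_mul_of_nonneg_left e2 hc0
  have hval : (T/n) / ((ℓ:ℝ) * (T/n) - (k:ℝ) * (T/n))^2 * (((ℓ-k:ℕ):ℝ) * K)
      = K / ((ℓ:ℝ) * (T/n) - (k:ℝ) * (T/n)) := by
    rw [hΔcast, show (ℓ:ℝ)*(T/n) - (k:ℝ)*(T/n) = ((ℓ:ℝ)-(k:ℝ))*(T/n) from by ring]
    field_simp
  calc Real.sqrt ((T/n) / ((ℓ:ℝ) * (T/n) - (k:ℝ) * (T/n))^2 *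
          (μ[(fun ω' => (∑ m ∈ Finset.Icc (k+1) ℓ,
              (V (m-1) ω' / σ (m * (T/n)) (X (m-1) ω')) * ε m ω')^2) | G k]) ω)
      ≤ Real.sqrt (K / ((ℓ:ℝ) * (T/n) - (k:ℝ) * (T/n))) :=
        Real.sqrt_le_sqrt (le_trans step (le_of_eq hval))
    _ = Real.sqrt K / Real.sqrt ((ℓ:ℝ) * (T/n) - (k:ℝ) * (T/n)) := Real.sqrt_div hKpos.le _
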